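/- arXiv:2308.07915 — 7 statements merged into one kernel-verified Lean document; each statement's English description precedes it below -/
import Mathlib

section
/- Let A and B be ℓm×ℓm matrices over F2, each an F2-linear combination of monomials x^a y^b. Then the check matrices H^X = [A | B] and H^Z = [Bᵀ | Aᵀ] have equal rank over F2: rank(H^X) = rank(H^Z). -/
open Matrix Kronecker

/-- The `n × n` cyclic-shift permutation matrix over `F₂`: row `i` has its unique `1`
in column `i + 1 (mod n)`. -/
def cyc (n : ℕ) [NeZero n] : Matrix (Fin n) (Fin n) (ZMod 2) :=
  Matrix.of fun i j => if j = i + 1 then 1 else 0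

/-- Rank is invariant under reindexing by equivalences, rectangular version. -/
lemma rank_submatrix' {R : Type*} [Field R] {k l m n : Type*}
    [Fintype k] [Fintype l] [Fintype m] [Fintype n] [DecidableEq l] [DecidableEq n]
    (A : Matrix k l R) (e₁ : m ≃ k) (e₂ : n ≃ l) :
    (A.submatrix e₁ e₂).rank = A.rank := by
  rw [Matrix.rank, Matrix.rank, Matrix.mulVecLin_submatrix, LinearMap.range_comp,
    LinearMap.range_comp,
    show LinearMap.funLeft R R e₂.symm = LinearEquiv.funCongrLeft R R e₂.symm from rfl,
    LinearEquiv.range, Submodule.map_top,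
    show LinearMap.funLeft R R (e₁ : m → k) = LinearEquiv.funCongrLeft R R e₁ from rfl]
  exact LinearEquiv.finrank_map_eq _ _

open Fin.NatCast Fin.CommRing in
lemma cyc_pow (n : ℕ) [NeZero n] (a : ℕ) :
    (cyc n) ^ a = Matrix.of fun i j => if j = i + (a : Fin n) then 1 else 0 := by
  induction a with
  | zero =>
    ext i j
    simp [Matrix.one_apply, eq_comm]
  | succ a ih =>
    rw [pow_succ, ih]
    ext i j
    rw [Matrix.mul_apply]
    simp only [Matrix.of_apply, cyc]
    rw [Finset.sum_eq_single (i + (a : Fin n))]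
    · simp [Nat.cast_add, Nat.cast_one, add_assoc]
    · intro b _ hb
      simp [hb]
    · simp

open Fin.NatCast Fin.CommRing in
lemma gen_transpose {ℓ m : ℕ} [NeZero ℓ] [NeZero m] (a b : ℕ) :
    ((((cyc ℓ) ^ a) ⊗ₖ ((cyc m) ^ b))).submatrix
      (fun p : Fin ℓ × Fin m => -p) (fun p : Fin ℓ × Fin m => -p) =
    (((cyc ℓ) ^ a) ⊗ₖ ((cyc m) ^ b))ᵀ := by
  ext ⟨i, j⟩ ⟨k, l⟩
  simp only [Matrix.submatrix_apply, Matrix.transpose_apply, Matrix.kroneckerMap_apply,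
    cyc_pow, Matrix.of_apply, Prod.fst_neg, Prod.snd_neg]
  have h1 : (-(k : Fin ℓ) = -i + (a : Fin ℓ)) ↔ (i = k + (a : Fin ℓ)) := by
    constructor <;> intro h <;> linear_combination h
  have h2 : (-(l : Fin m) = -j + (b : Fin m)) ↔ (j = l + (b : Fin m)) := by
    constructor <;> intro h <;> linear_combination h
  simp only [h1, h2]

theorem stmt1 (ℓ m : ℕ) [NeZero ℓ] [NeZero m]
    (x y A B : Matrix (Fin ℓ × Fin m) (Fin ℓ × Fin m) (ZMod 2))
    (hx : x = cyc ℓ ⊗ₖ (1 : Matrix (Fin m) (Fin m) (ZMod 2)))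
    (hy : y = (1 : Matrix (Fin ℓ) (Fin ℓ) (ZMod 2)) ⊗ₖ cyc m)
    (hA : A ∈ Submodule.span (ZMod 2)
      {M : Matrix (Fin ℓ × Fin m) (Fin ℓ × Fin m) (ZMod 2) | ∃ a b : ℕ, M = x ^ a * y ^ b})
    (hB : B ∈ Submodule.span (ZMod 2)
      {M : Matrix (Fin ℓ × Fin m) (Fin ℓ × Fin m) (ZMod 2) | ∃ a b : ℕ, M = x ^ a * y ^ b})
    : (Matrix.fromCols A B).rank = (Matrix.fromCols Bᵀ Aᵀ).rank := by
  -- powers of x and y as Kronecker products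
  have hxa : ∀ a : ℕ, x ^ a = ((cyc ℓ) ^ a) ⊗ₖ (1 : Matrix (Fin m) (Fin m) (ZMod 2)) := by
    intro a
    induction a with
    | zero => simp [Matrix.one_kronecker_one]
    | succ a ih =>
      rw [pow_succ, ih, hx, pow_succ, ← Matrix.mul_kronecker_mul, one_mul]
  have hyb : ∀ b : ℕ, y ^ b = (1 : Matrix (Fin ℓ) (Fin ℓ) (ZMod 2)) ⊗ₖ ((cyc m) ^ b) := by
    intro b
    induction b with
    | zero => simp [Matrix.one_kronecker_one]
    | succ b ih =>
      rw [pow_succ, ih, hy, pow_succ, ← Matrix.mul_kronecker_mul, one_mul]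
  have hgen : ∀ a b : ℕ, x ^ a * y ^ b = ((cyc ℓ) ^ a) ⊗ₖ ((cyc m) ^ b) := by
    intro a b
    rw [hxa, hyb, ← Matrix.mul_kronecker_mul, mul_one, one_mul]
  -- the key symmetry: for M in the span, Mᵀ is a submatrix of M via negation
  have key : ∀ M ∈ Submodule.span (ZMod 2)
      {M : Matrix (Fin ℓ × Fin m) (Fin ℓ × Fin m) (ZMod 2) | ∃ a b : ℕ, M = x ^ a * y ^ b},
      M.submatrix (fun p : Fin ℓ × Fin m => -p) (fun p : Fin ℓ × Fin m => -p) = Mᵀ := by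
    intro M hM
    induction hM using Submodule.span_induction with
    | mem M hM =>
      obtain ⟨a, b, rfl⟩ := hM
      rw [hgen]
      exact gen_transpose a b
    | zero => simp
    | add M N _ _ ihM ihN => rw [Matrix.submatrix_add, Matrix.transpose_add]; simp [ihM, ihN]
    | smul c M _ ihM => rw [Matrix.submatrix_smul, Matrix.transpose_smul]; simp [ihM]
  have hAT := key A hA
  have hBT := key B hB
  -- reindexing equivalences
  let en : (Fin ℓ × Fin m) ≃ (Fin ℓ × Fin m) := Equiv.neg _
  let ec : ((Fin ℓ × Fin m) ⊕ (Fin ℓ × Fin m)) ≃ ((Fin ℓ × Fin m) ⊕ (Fin ℓ × Fin m)) :=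
    (Equiv.sumComm _ _).trans (Equiv.sumCongr en en)
  have heq : Matrix.fromCols Bᵀ Aᵀ = (Matrix.fromCols A B).submatrix en ec := by
    ext u v
    cases v with
    | inl v =>
      have : (Matrix.fromCols A B).submatrix en ec u (Sum.inl v) = B (-u) (-v) := rfl
      rw [this]
      have := congrFun (congrFun hBT u) v
      simp only [Matrix.submatrix_apply, Matrix.transpose_apply] at this
      simpa using this.symm
    | inr v =>
      have : (Matrix.fromCols A B).submatrix en ec u (Sum.inr v) = A (-u) (-v) := rfl
      rw [this]
      have := congrFun (congrFun hAT u) v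
      simp only [Matrix.submatrix_apply, Matrix.transpose_apply] at this
      simpa using this.symm
  rw [heq, rank_submatrix']
end

section
/- Let A and B be ℓm×ℓm matrices over F2, each an F2-linear combination of monomials x^a y^b, and let H^X = [A | B], H^Z = [Bᵀ | Aᵀ]. Then the number of logical qubits k = 2ℓm − rank(H^X) − rank(H^Z) satisfies k = 2 · dim(ker(A) ∩ ker(B)), where ker(A), ker(B) are the null spaces {v ∈ F2^{ℓm} : Av = 0}, {v ∈ F2^{ℓm} : Bv = 0} and dim is the F2-dimension of their intersection. -/
open Matrix Kronecker

/-- The negation permutation matrix. -/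
def negMat (n : ℕ) [NeZero n] : Matrix (Fin n) (Fin n) (ZMod 2) :=
  Matrix.of fun i j => if j = -i then 1 else 0

lemma negMat_mul_negMat (n : ℕ) [NeZero n] : negMat n * negMat n = 1 := by
  ext i j
  simp only [negMat, Matrix.mul_apply, Matrix.of_apply, ite_mul, one_mul, zero_mul,
    Finset.sum_ite_eq', Finset.mem_univ, if_true, neg_neg, Matrix.one_apply, eq_comm]

lemma negMat_conj_cyc (n : ℕ) [NeZero n] :
    negMat n * cyc n * negMat n = (cyc n)ᵀ := by
  ext i j
  simp only [negMat, cyc, Matrix.mul_apply, Matrix.of_apply, Matrix.transpose_apply,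
    ite_mul, mul_ite, one_mul, mul_one, zero_mul, mul_zero,
    Finset.sum_ite_eq', Finset.sum_ite_eq, Finset.mem_univ, if_true]
  simp only [show ∀ x : Fin n, (j = -x) = (x = -j) from fun x =>
      propext ⟨fun h => by simp [h], fun h => by simp [h]⟩,
    show ∀ x x1 : Fin n, (x = x1 + 1) = (x1 = x - 1) from fun x x1 =>
      propext ⟨fun h => by simp [h], fun h => by simp [h]⟩,
    Finset.sum_ite_eq', Finset.mem_univ, if_true]
  congr 1
  open Fin.CommRing in
  exact propext ⟨fun h => by linear_combination -h, fun h => by linear_combination -h⟩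

lemma myConjPow {R : Type*} [CommRing R] {k : Type*} [Fintype k] [DecidableEq k]
    (P M : Matrix k k R) (hP : P * P = 1) (a : ℕ) :
    P * M ^ a * P = (P * M * P) ^ a := by
  induction a with
  | zero => simpa using hP
  | succ a ih =>
      rw [pow_succ, pow_succ, ← ih]
      simp only [mul_assoc]
      rw [← mul_assoc P P, hP, one_mul]

lemma rank_fromRows_ker {k : Type*} [Fintype k] [DecidableEq k]
    (M N : Matrix k k (ZMod 2)) :
    (Matrix.fromRows M N).rank
      + Module.finrank (ZMod 2)
          ↥(LinearMap.ker M.mulVecLin ⊓ LinearMap.ker N.mulVecLin)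
      = Fintype.card k := by
  have h := LinearMap.finrank_range_add_finrank_ker (Matrix.fromRows M N).mulVecLin
  have hk : LinearMap.ker (Matrix.fromRows M N).mulVecLin
      = LinearMap.ker M.mulVecLin ⊓ LinearMap.ker N.mulVecLin := by
    ext v
    simp [LinearMap.mem_ker, Matrix.mulVecLin_apply, Matrix.fromRows_mulVec,
      funext_iff, Sum.forall, Submodule.mem_inf]
  rw [hk, Module.finrank_pi] at h
  rw [← h]
  rfl

theorem stmt2 (ℓ m : ℕ) [NeZero ℓ] [NeZero m]
    (x y A B : Matrix (Fin ℓ × Fin m) (Fin ℓ × Fin m) (ZMod 2))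
    (hx : x = cyc ℓ ⊗ₖ (1 : Matrix (Fin m) (Fin m) (ZMod 2)))
    (hy : y = (1 : Matrix (Fin ℓ) (Fin ℓ) (ZMod 2)) ⊗ₖ cyc m)
    (hA : A ∈ Submodule.span (ZMod 2)
      {M : Matrix (Fin ℓ × Fin m) (Fin ℓ × Fin m) (ZMod 2) | ∃ a b : ℕ, M = x ^ a * y ^ b})
    (hB : B ∈ Submodule.span (ZMod 2)
      {M : Matrix (Fin ℓ × Fin m) (Fin ℓ × Fin m) (ZMod 2) | ∃ a b : ℕ, M = x ^ a * y ^ b}) :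
    2 * ℓ * m - (Matrix.fromCols A B).rank - (Matrix.fromCols Bᵀ Aᵀ).rank
      = 2 * Module.finrank (ZMod 2)
          ↥(LinearMap.ker A.mulVecLin ⊓ LinearMap.ker B.mulVecLin) := by
  set P : Matrix (Fin ℓ × Fin m) (Fin ℓ × Fin m) (ZMod 2) := negMat ℓ ⊗ₖ negMat m with hP
  have hPP : P * P = 1 := by
    rw [hP, ← Matrix.mul_kronecker_mul, negMat_mul_negMat, negMat_mul_negMat,
      Matrix.one_kronecker_one]
  have hPx : P * x * P = xᵀ := by
    rw [hx, hP, ← Matrix.mul_kronecker_mul, ← Matrix.mul_kronecker_mul,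
      negMat_conj_cyc, Matrix.mul_one, negMat_mul_negMat]
    rw [← Matrix.kroneckerMap_transpose, Matrix.transpose_one]
  have hPy : P * y * P = yᵀ := by
    rw [hy, hP, ← Matrix.mul_kronecker_mul, ← Matrix.mul_kronecker_mul,
      negMat_conj_cyc, Matrix.mul_one, negMat_mul_negMat]
    rw [← Matrix.kroneckerMap_transpose, Matrix.transpose_one]
  have hcomm : x * y = y * x := by
    rw [hx, hy, ← Matrix.mul_kronecker_mul, ← Matrix.mul_kronecker_mul]
    simp
  -- transpose is conjugation by P on the span
  have key : ∀ M ∈ Submodule.span (ZMod 2)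
      {M : Matrix (Fin ℓ × Fin m) (Fin ℓ × Fin m) (ZMod 2) | ∃ a b : ℕ, M = x ^ a * y ^ b},
      Mᵀ = P * M * P := by
    intro M hM
    induction hM using Submodule.span_induction with
    | mem M hMm =>
        obtain ⟨a, b, rfl⟩ := hMm
        have h1 : P * (x ^ a * y ^ b) * P = (P * x ^ a * P) * (P * y ^ b * P) := by
          simp only [mul_assoc]
          rw [← mul_assoc P P, hPP, one_mul]
        rw [Matrix.transpose_mul, Matrix.transpose_pow, Matrix.transpose_pow, h1,
          myConjPow _ _ hPP, myConjPow _ _ hPP, hPx, hPy]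
        have hc : yᵀ * xᵀ = xᵀ * yᵀ := by
          rw [← Matrix.transpose_mul, ← Matrix.transpose_mul, hcomm]
        exact (Commute.pow_pow hc b a)
    | zero => simp
    | add M N _ _ hM hN => rw [Matrix.transpose_add, hM, hN, Matrix.mul_add, Matrix.add_mul]
    | smul c M _ hM => rw [Matrix.transpose_smul, hM]; simp [Matrix.mul_smul, Matrix.smul_mul]
  have hAT : Aᵀ = P * A * P := key A hA
  have hBT : Bᵀ = P * B * P := key B hB
  -- kernels of conjugates
  have hPinj : ∀ u : (Fin ℓ × Fin m) → ZMod 2, P.mulVec u = 0 → u = 0 := by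
    intro u hu
    have : (P * P).mulVec u = 0 := by
      rw [← Matrix.mulVec_mulVec, hu, Matrix.mulVec_zero]
    rwa [hPP, Matrix.one_mulVec] at this
  have hker : ∀ C : Matrix (Fin ℓ × Fin m) (Fin ℓ × Fin m) (ZMod 2),
      LinearMap.ker (P * C * P).mulVecLin
        = Submodule.comap P.mulVecLin (LinearMap.ker C.mulVecLin) := by
    intro C
    ext v
    simp only [LinearMap.mem_ker, Submodule.mem_comap, Matrix.mulVecLin_apply,
      ← Matrix.mulVec_mulVec]
    constructor
    · intro h
      exact hPinj _ h
    · intro h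
      rw [h, Matrix.mulVec_zero]
  -- the equiv given by P
  have hPlin : P.mulVecLin ∘ₗ P.mulVecLin = LinearMap.id := by
    rw [← Matrix.mulVecLin_mul, hPP, Matrix.mulVecLin_one]
  let e : ((Fin ℓ × Fin m) → ZMod 2) ≃ₗ[ZMod 2] ((Fin ℓ × Fin m) → ZMod 2) :=
    LinearEquiv.ofLinear P.mulVecLin P.mulVecLin hPlin hPlin
  have hdim : Module.finrank (ZMod 2)
        ↥(LinearMap.ker Aᵀ.mulVecLin ⊓ LinearMap.ker Bᵀ.mulVecLin)
      = Module.finrank (ZMod 2)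
        ↥(LinearMap.ker A.mulVecLin ⊓ LinearMap.ker B.mulVecLin) := by
    rw [hAT, hBT, hker, hker, ← Submodule.comap_inf]
    rw [show P.mulVecLin = e.toLinearMap from rfl,
      Submodule.comap_equiv_eq_map_symm]
    exact LinearEquiv.finrank_map_eq _ _
  -- rank computations
  have hX : (Matrix.fromCols A B).rank
      + Module.finrank (ZMod 2)
          ↥(LinearMap.ker Aᵀ.mulVecLin ⊓ LinearMap.ker Bᵀ.mulVecLin) = ℓ * m := by
    rw [← Matrix.rank_transpose, Matrix.transpose_fromCols]
    have := rank_fromRows_ker Aᵀ Bᵀ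
    rwa [Fintype.card_prod, Fintype.card_fin, Fintype.card_fin] at this
  have hZ : (Matrix.fromCols Bᵀ Aᵀ).rank
      + Module.finrank (ZMod 2)
          ↥(LinearMap.ker A.mulVecLin ⊓ LinearMap.ker B.mulVecLin) = ℓ * m := by
    rw [← Matrix.rank_transpose, Matrix.transpose_fromCols]
    have := rank_fromRows_ker Bᵀᵀ Aᵀᵀ
    rw [Fintype.card_prod, Fintype.card_fin, Fintype.card_fin,
      Matrix.transpose_transpose, Matrix.transpose_transpose, inf_comm] at this
    exact this
  rw [hdim] at hX
  rw [mul_assoc]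
  omega
end

section
/- Let A and B be ℓm×ℓm matrices over F2, each an F2-linear combination of monomials x^a y^b, with H^X = [A | B] and H^Z = [Bᵀ | Aᵀ], and suppose rank(H^X) + rank(H^Z) < 2ℓm (so both sets below are nonempty). Then the X-distance equals the Z-distance: min{ |v| : v ∈ ker(H^Z), v ∉ rowspace(H^X) } = min{ |v| : v ∈ ker(H^X), v ∉ rowspace(H^Z) }. -/
open Matrix Kronecker

section aux
variable {ι : Type*} [Fintype ι] [DecidableEq ι]

lemma key_norm (E : ι → ι) (hE : ∀ i, E (E i) = i) (v : ι ⊕ ι → ZMod 2) :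
    hammingNorm (v ∘ Sum.elim (Sum.inr ∘ E) (Sum.inl ∘ E)) = hammingNorm v := by
  set g : ι ⊕ ι → ι ⊕ ι := Sum.elim (Sum.inr ∘ E) (Sum.inl ∘ E) with hgdef
  have hg : ∀ s, g (g s) = s := by rintro (i | i) <;> simp [hgdef, hE]
  unfold hammingNorm
  apply Finset.card_bij' (fun a _ => g a) (fun a _ => g a) <;>
    simp_all [Function.comp]

lemma key_mulVec (A B : Matrix ι ι (ZMod 2)) (E : ι → ι) (hE : ∀ i, E (E i) = i)
    (hA : ∀ a b, A (E a) (E b) = A b a) (hB : ∀ a b, B (E a) (E b) = B b a)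
    (v : ι ⊕ ι → ZMod 2) :
    (fromCols A B) *ᵥ (v ∘ Sum.elim (Sum.inr ∘ E) (Sum.inl ∘ E))
      = ((fromCols Bᵀ Aᵀ) *ᵥ v) ∘ E := by
  funext r
  simp only [mulVec, dotProduct, Function.comp_apply, Fintype.sum_sum_type,
    fromCols_apply_inl, fromCols_apply_inr, Sum.elim_inl, Sum.elim_inr,
    transpose_apply]
  have h1 : ∑ j, A r j * v (Sum.inr (E j)) = ∑ j, A j (E r) * v (Sum.inr j) := by
    rw [← Equiv.sum_comp (⟨E, E, hE, hE⟩ : ι ≃ ι) (fun j => A j (E r) * v (Sum.inr j))]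
    refine Finset.sum_congr rfl fun j _ => ?_
    show A r j * v (Sum.inr (E j)) = A (E j) (E r) * v (Sum.inr (E j))
    rw [hA j r]
  have h2 : ∑ j, B r j * v (Sum.inl (E j)) = ∑ j, B j (E r) * v (Sum.inl j) := by
    rw [← Equiv.sum_comp (⟨E, E, hE, hE⟩ : ι ≃ ι) (fun j => B j (E r) * v (Sum.inl j))]
    refine Finset.sum_congr rfl fun j _ => ?_
    show B r j * v (Sum.inl (E j)) = B (E j) (E r) * v (Sum.inl (E j))
    rw [hB j r]
  rw [h1, h2, add_comm]

lemma key_span (A B : Matrix ι ι (ZMod 2)) (E : ι → ι) (hE : ∀ i, E (E i) = i)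
    (hA : ∀ a b, A (E a) (E b) = A b a) (hB : ∀ a b, B (E a) (E b) = B b a)
    (v : ι ⊕ ι → ZMod 2)
    (hv : v ∈ Submodule.span (ZMod 2) (Set.range fun i => fromCols A B i)) :
    (v ∘ Sum.elim (Sum.inr ∘ E) (Sum.inl ∘ E)) ∈
      Submodule.span (ZMod 2) (Set.range fun i => fromCols Bᵀ Aᵀ i) := by
  set g : ι ⊕ ι → ι ⊕ ι := Sum.elim (Sum.inr ∘ E) (Sum.inl ∘ E) with hgdef
  induction hv using Submodule.span_induction with
  | mem w hw =>
      obtain ⟨r, rfl⟩ := hw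
      apply Submodule.subset_span
      refine ⟨E r, ?_⟩
      funext s
      rcases s with j | j <;>
        simp [hgdef, fromCols_apply_inl, fromCols_apply_inr, transpose_apply]
      · rw [← hB (E r) j, hE]
      · rw [← hA (E r) j, hE]
  | zero => simpa using (Submodule.zero_mem _ : (0 : ι ⊕ ι → ZMod 2) ∈ _)
  | add w₁ w₂ _ _ ih1 ih2 => exact Submodule.add_mem _ ih1 ih2
  | smul c w _ ih => exact Submodule.smul_mem _ c ih

end aux

theorem stmt3 (ℓ m : ℕ) [NeZero ℓ] [NeZero m]
    (x y A B : Matrix (Fin ℓ × Fin m) (Fin ℓ × Fin m) (ZMod 2))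
    (hx : x = cyc ℓ ⊗ₖ (1 : Matrix (Fin m) (Fin m) (ZMod 2)))
    (hy : y = (1 : Matrix (Fin ℓ) (Fin ℓ) (ZMod 2)) ⊗ₖ cyc m)
    (hA : A ∈ Submodule.span (ZMod 2)
      {M : Matrix (Fin ℓ × Fin m) (Fin ℓ × Fin m) (ZMod 2) | ∃ a b : ℕ, M = x ^ a * y ^ b})
    (hB : B ∈ Submodule.span (ZMod 2)
      {M : Matrix (Fin ℓ × Fin m) (Fin ℓ × Fin m) (ZMod 2) | ∃ a b : ℕ, M = x ^ a * y ^ b})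
    (hrk : (Matrix.fromCols A B).rank + (Matrix.fromCols Bᵀ Aᵀ).rank < 2 * ℓ * m) :
    sInf {w : ℕ | ∃ v : (Fin ℓ × Fin m) ⊕ (Fin ℓ × Fin m) → ZMod 2,
        (Matrix.fromCols Bᵀ Aᵀ).mulVec v = 0 ∧
        v ∉ Submodule.span (ZMod 2) (Set.range fun i => Matrix.fromCols A B i) ∧
        hammingNorm v = w}
      = sInf {w : ℕ | ∃ v : (Fin ℓ × Fin m) ⊕ (Fin ℓ × Fin m) → ZMod 2,
        (Matrix.fromCols A B).mulVec v = 0 ∧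
        v ∉ Submodule.span (ZMod 2) (Set.range fun i => Matrix.fromCols Bᵀ Aᵀ i) ∧
        hammingNorm v = w} := by
  classical
  set E : Fin ℓ × Fin m → Fin ℓ × Fin m := fun p => (-p.1, -p.2) with hEdef
  have hE : ∀ p, E (E p) = p := by
    rintro ⟨i, j⟩; simp [hEdef]
  have hxy : x * y = y * x := by
    subst hx hy
    rw [← Matrix.mul_kronecker_mul, ← Matrix.mul_kronecker_mul, Matrix.one_mul,
      Matrix.mul_one, Matrix.one_mul, Matrix.mul_one]
  have hxE : xᵀ = x.submatrix E E := by
    subst hx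
    ext ⟨i, j⟩ ⟨i', j'⟩
    simp only [transpose_apply, submatrix_apply, kroneckerMap_apply, cyc, of_apply,
      Matrix.one_apply, hEdef]
    have h1 : (i = i' + 1) ↔ ((-i' : Fin ℓ) = -i + 1) := by
      constructor <;> intro h <;> (open Fin.CommRing in linear_combination h)
    have h2 : (j' = j) ↔ ((-j : Fin m) = -j') := by
      constructor <;> intro h <;> (open Fin.CommRing in linear_combination h)
    rw [if_congr h1 rfl rfl, if_congr h2 rfl rfl]
  have hyE : yᵀ = y.submatrix E E := by
    subst hy
    ext ⟨i, j⟩ ⟨i', j'⟩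
    simp only [transpose_apply, submatrix_apply, kroneckerMap_apply, cyc, of_apply,
      Matrix.one_apply, hEdef]
    have h1 : (j = j' + 1) ↔ ((-j' : Fin m) = -j + 1) := by
      constructor <;> intro h <;> (open Fin.CommRing in linear_combination h)
    have h2 : (i' = i) ↔ ((-i : Fin ℓ) = -i') := by
      constructor <;> intro h <;> (open Fin.CommRing in linear_combination h)
    rw [if_congr h2 rfl rfl, if_congr h1 rfl rfl]
  have hΦmul : ∀ M N : Matrix (Fin ℓ × Fin m) (Fin ℓ × Fin m) (ZMod 2),
      (M * N).submatrix E E = M.submatrix E E * N.submatrix E E :=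
    fun M N => (Matrix.submatrix_mul_equiv M N E (⟨E, E, hE, hE⟩ : _ ≃ _) E).symm
  have hΦone : (1 : Matrix (Fin ℓ × Fin m) (Fin ℓ × Fin m) (ZMod 2)).submatrix E E = 1 :=
    Matrix.submatrix_one_equiv (⟨E, E, hE, hE⟩ : _ ≃ _)
  have hΦpow : ∀ (M : Matrix (Fin ℓ × Fin m) (Fin ℓ × Fin m) (ZMod 2)) (k : ℕ),
      (M ^ k).submatrix E E = (M.submatrix E E) ^ k := by
    intro M k
    induction k with
    | zero => simpa [pow_zero] using hΦone
    | succ n ih => rw [pow_succ, hΦmul, ih, pow_succ]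
  have hsym : ∀ M ∈ Submodule.span (ZMod 2)
      {M : Matrix (Fin ℓ × Fin m) (Fin ℓ × Fin m) (ZMod 2) | ∃ a b : ℕ, M = x ^ a * y ^ b},
      Mᵀ = M.submatrix E E := by
    intro M hM
    induction hM using Submodule.span_induction with
    | mem w hw =>
        obtain ⟨a, b, rfl⟩ := hw
        rw [hΦmul, hΦpow, hΦpow, ← hxE, ← hyE, ← Matrix.transpose_pow, ← Matrix.transpose_pow,
          ← Matrix.transpose_mul, ((Commute.pow_pow hxy a b).eq : x ^ a * y ^ b = y ^ b * x ^ a)]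
    | zero => simp
    | add w₁ w₂ _ _ ih1 ih2 => rw [Matrix.transpose_add]; ext i j; simp_all
    | smul c w _ ih => rw [Matrix.transpose_smul]; ext i j; simp_all
  have hA' : ∀ a b, A (E a) (E b) = A b a := fun a b =>
    (congrFun (congrFun (hsym A hA) a) b).symm
  have hB' : ∀ a b, B (E a) (E b) = B b a := fun a b =>
    (congrFun (congrFun (hsym B hB) a) b).symm
  have hA'' : ∀ a b, Bᵀ (E a) (E b) = Bᵀ b a := fun a b => hB' b a
  have hB'' : ∀ a b, Aᵀ (E a) (E b) = Aᵀ b a := fun a b => hA' b a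
  set g : (Fin ℓ × Fin m) ⊕ (Fin ℓ × Fin m) → (Fin ℓ × Fin m) ⊕ (Fin ℓ × Fin m) :=
    Sum.elim (Sum.inr ∘ E) (Sum.inl ∘ E) with hgdef
  have hgg : ∀ v : (Fin ℓ × Fin m) ⊕ (Fin ℓ × Fin m) → ZMod 2, (v ∘ g) ∘ g = v := by
    intro v; funext s; rcases s with i | i <;> simp [hgdef, hE]
  have hzero : ∀ u : (Fin ℓ × Fin m) → ZMod 2, (0 : (Fin ℓ × Fin m) → ZMod 2) ∘ E = 0 := by
    intro _; funext s; rfl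
  congr 1
  ext w
  simp only [Set.mem_setOf_eq]
  constructor
  · rintro ⟨v, h1, h2, h3⟩
    refine ⟨v ∘ g, ?_, ?_, ?_⟩
    · rw [hgdef, key_mulVec A B E hE hA' hB' v, h1]; funext s; rfl
    · intro hmem
      apply h2
      have := key_span Bᵀ Aᵀ E hE hA'' hB'' _ (by simpa [hgdef] using hmem)
      rw [hgg] at this
      simpa [Matrix.transpose_transpose] using this
    · rw [hgdef, key_norm E hE v]; exact h3
  · rintro ⟨v, h1, h2, h3⟩
    refine ⟨v ∘ g, ?_, ?_, ?_⟩
    · rw [hgdef, key_mulVec Bᵀ Aᵀ E hE hA'' hB'' v]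
      simp only [Matrix.transpose_transpose]
      rw [h1]; funext s; rfl
    · intro hmem
      apply h2
      have := key_span A B E hE hA' hB' _ (by simpa [hgdef] using hmem)
      rw [hgg] at this
      exact this
    · rw [hgdef, key_norm E hE v]; exact h3
end

section
/- Let G be a finite commutative group and P, Q, A, B ∈ F2[G]. Then for every α ∈ G, the overlap parity of X(P,Q) with the Z-check indexed by α satisfies Σ_{β ∈ G} [ P_β · (α·B*)_β + Q_β · (α·A*)_β ] = (P·B + Q·A)_α, where α·B* denotes the product in F2[G] of the basis element α with B*. In particular, X(P,Q) commutes with every Z-check Z(αBᵀ, αAᵀ), α ∈ G, if and only if P·B + Q·A = 0 in F2[G]. -/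
/-- The "transpose" (antipode) of an element of the group algebra `F₂[G]`: the image of
`P` under the `F₂`-linear map induced on group elements by `α ↦ α⁻¹`. -/
noncomputable def tr {G : Type*} [CommGroup G] (P : MonoidAlgebra (ZMod 2) G) :
    MonoidAlgebra (ZMod 2) G :=
  MonoidAlgebra.ofCoeff (Finsupp.mapDomain (fun α => α⁻¹) P.coeff)

private lemma key {G : Type*} [CommGroup G] [Fintype G] [DecidableEq G]
    (P B : MonoidAlgebra (ZMod 2) G) (α : G) :
    ∑ β : G, P.coeff β * ((MonoidAlgebra.single α (1 : ZMod 2)) * tr B).coeff β = (P * B).coeff α := by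
  rw [MonoidAlgebra.coeff_mul_apply_left, Finsupp.sum,
    ← Finset.sum_subset (Finset.subset_univ P.coeff.support)
      (by intro x _ hx; simp [Finsupp.notMem_support_iff.mp hx])]
  apply Finset.sum_congr rfl
  intro β _
  rw [MonoidAlgebra.coeff_single_mul_apply, one_mul, tr, MonoidAlgebra.coeff_ofCoeff,
    show α⁻¹ * β = (β⁻¹ * α)⁻¹ by group,
    Finsupp.mapDomain_apply inv_injective]

theorem stmt9 {G : Type*} [CommGroup G] [Fintype G] [DecidableEq G]
    (P Q A B : MonoidAlgebra (ZMod 2) G) :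
    (∀ α : G,
      (∑ β : G, (P.coeff β * ((MonoidAlgebra.single α (1 : ZMod 2)) * tr B).coeff β
          + Q.coeff β * ((MonoidAlgebra.single α (1 : ZMod 2)) * tr A).coeff β))
        = (P * B + Q * A).coeff α) ∧
    ((∀ α : G,
      (∑ β : G, (P.coeff β * ((MonoidAlgebra.single α (1 : ZMod 2)) * tr B).coeff β
          + Q.coeff β * ((MonoidAlgebra.single α (1 : ZMod 2)) * tr A).coeff β)) = 0)
      ↔ P * B + Q * A = 0) := by
  have h : ∀ α : G,
      (∑ β : G, (P.coeff β * ((MonoidAlgebra.single α (1 : ZMod 2)) * tr B).coeff β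
          + Q.coeff β * ((MonoidAlgebra.single α (1 : ZMod 2)) * tr A).coeff β))
        = (P * B + Q * A).coeff α := by
    intro α
    rw [Finset.sum_add_distrib, key P B α, key Q A α]
    rfl
  refine ⟨h, ?_⟩
  constructor
  · intro hc
    ext α
    rw [← h α, hc α]
    rfl
  · intro hc α
    rw [h α, hc]
    rfl
end

section
/- Let A₁, A₂, A₃, B₁, B₂, B₃ be ℓm×ℓm matrices over F2 such that each Aᵢ commutes with each Bⱼ, and set A = A₁+A₂+A₃, B = B₁+B₂+B₃. Consider quadruples (T₁,T₂,T₃,T₄) of ℓm×ℓm matrices over F2 and apply in order the seven rounds: R1: T₄ ← T₄ + T₃A₁; R2: T₂ ← T₂ + T₁A₂ and T₄ ← T₄ + T₃A₃; R3: T₃ ← T₃ + T₁B₂ and T₄ ← T₄ + T₂B₁; R4: T₃ ← T₃ + T₁B₁ and T₄ ← T₄ + T₂B₂; R5: T₃ ← T₃ + T₁B₃ and T₄ ← T₄ + T₂B₃; R6: T₂ ← T₂ + T₁A₁ and T₄ ← T₄ + T₃A₂; R7: T₂ ← T₂ + T₁A₃. Then this composition maps (I, 0, 0, 0) to (I, A,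 B, 0) and maps (0, A, B, 0) to (0, A, B, 0). -/
open Matrix

/-- The action of the seven CNOT rounds of the syndrome-measurement cycle on the
stabilizer tableau `(T₁, T₂, T₃, T₄)` representing the registers `q(X), q(L), q(R), q(Z)`;
a CNOT layer with control register `a`, target register `b` and matrix `M` acts by
`T_b ← T_b + T_a · M`.  Within each round the two updates act on disjoint registers, so
they may be applied sequentially. -/
def rounds {ι : Type*} [Fintype ι] [DecidableEq ι]
    (A1 A2 A3 B1 B2 B3 : Matrix ι ι (ZMod 2))
    (t : Matrix ι ι (ZMod 2) × Matrix ι ι (ZMod 2) ×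
         Matrix ι ι (ZMod 2) × Matrix ι ι (ZMod 2)) :
    Matrix ι ι (ZMod 2) × Matrix ι ι (ZMod 2) ×
      Matrix ι ι (ZMod 2) × Matrix ι ι (ZMod 2) :=
  match t with
  | (t1, t2, t3, t4) =>
    -- Round 1
    let t4 := t4 + t3 * A1
    -- Round 2
    let t2 := t2 + t1 * A2
    let t4 := t4 + t3 * A3
    -- Round 3
    let t3 := t3 + t1 * B2
    let t4 := t4 + t2 * B1
    -- Round 4
    let t3 := t3 + t1 * B1
    let t4 := t4 + t2 * B2
    -- Round 5
    let t3 := t3 + t1 * B3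
    let t4 := t4 + t2 * B3
    -- Round 6
    let t2 := t2 + t1 * A1
    let t4 := t4 + t3 * A2
    -- Round 7
    let t2 := t2 + t1 * A3
    (t1, t2, t3, t4)

theorem stmt10 {ι : Type*} [Fintype ι] [DecidableEq ι]
    (A1 A2 A3 B1 B2 B3 : Matrix ι ι (ZMod 2))
    (hcomm : ∀ i j : Fin 3,
      ![A1, A2, A3] i * ![B1, B2, B3] j = ![B1, B2, B3] j * ![A1, A2, A3] i) :
    rounds A1 A2 A3 B1 B2 B3 (1, 0, 0, 0) = (1, A1 + A2 + A3, B1 + B2 + B3, 0) ∧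
    rounds A1 A2 A3 B1 B2 B3 (0, A1 + A2 + A3, B1 + B2 + B3, 0)
      = (0, A1 + A2 + A3, B1 + B2 + B3, 0) := by
  have h11 := hcomm 0 0; have h12 := hcomm 0 1; have h13 := hcomm 0 2
  have h21 := hcomm 1 0; have h22 := hcomm 1 1; have h23 := hcomm 1 2
  have h31 := hcomm 2 0; have h32 := hcomm 2 1; have h33 := hcomm 2 2
  simp only [Matrix.cons_val_zero, Matrix.cons_val_one, Matrix.head_cons,
    Matrix.cons_val_two, Matrix.tail_cons] at h11 h12 h13 h21 h22 h23 h31 h32 h33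
  have two : ∀ x : Matrix ι ι (ZMod 2), x + x = 0 := fun x => by
    ext i j
    exact CharTwo.add_self_eq_zero _
  constructor <;>
  · simp only [rounds, zero_mul, one_mul, mul_zero, zero_add, add_zero, Prod.mk.injEq,
      add_mul, mul_add]
    refine ⟨trivial, ?_, ?_, ?_⟩ <;>
      (try simp only [h11, h12, h13, h21, h22, h23, h31, h32, h33]) <;> abel_nf <;>
      try simp [two_mul, two_nsmul, two_smul, two]
end

section
/- Let A₁, A₂, A₃, B₁, B₂, B₃ be ℓm×ℓm matrices over F2, A = A₁+A₂+A₃, B = B₁+B₂+B₃, and let u, w ∈ F2^{ℓm} be row vectors satisfying u·B + w·A = 0. Then the composition of the seven rounds R1: t₄ ← t₄ + t₃A₁; R2: t₂ ← t₂ + t₁A₂ and t₄ ← t₄ + t₃A₃; R3: t₃ ← t₃ + t₁B₂ and t₄ ← t₄ + t₂B₁; R4: t₃ ← t₃ + t₁B₁ and t₄ ← t₄ + t₂B₂; R5: t₃ ← t₃ + t₁B₃ and t₄ ← t₄ + t₂B₃; R6: t₂ ← t₂ + t₁A₁ and t₄ ← t₄ + t₃A₂; R7: t₂ ← t₂ +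 t₁A₃, acting on quadruples (t₁,t₂,t₃,t₄) of row vectors in F2^{ℓm} by t_b ← t_b + t_a·M, maps (0, u, w, 0) to itself. Hence the syndrome cycle acts trivially on every logical X-type operator. -/
open Matrix

def roundsVec {ι : Type*} [Fintype ι] [DecidableEq ι]
    (A1 A2 A3 B1 B2 B3 : Matrix ι ι (ZMod 2))
    (t : (ι → ZMod 2) × (ι → ZMod 2) × (ι → ZMod 2) × (ι → ZMod 2)) :
    (ι → ZMod 2) × (ι → ZMod 2) × (ι → ZMod 2) × (ι → ZMod 2) :=
  match t with
  | (t1, t2, t3, t4) =>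
    -- Round 1
    let t4 := t4 + t3 ᵥ* A1
    -- Round 2
    let t2 := t2 + t1 ᵥ* A2
    let t4 := t4 + t3 ᵥ* A3
    -- Round 3
    let t3 := t3 + t1 ᵥ* B2
    let t4 := t4 + t2 ᵥ* B1
    -- Round 4
    let t3 := t3 + t1 ᵥ* B1
    let t4 := t4 + t2 ᵥ* B2
    -- Round 5
    let t3 := t3 + t1 ᵥ* B3
    let t4 := t4 + t2 ᵥ* B3
    -- Round 6
    let t2 := t2 + t1 ᵥ* A1
    let t4 := t4 + t3 ᵥ* A2
    -- Round 7
    let t2 := t2 + t1 ᵥ* A3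
    (t1, t2, t3, t4)

/-- The syndrome cycle acts trivially on every logical X-type operator `(u, w)` with
`u·B + w·A = 0`. -/
theorem stmt11 {ι : Type*} [Fintype ι] [DecidableEq ι]
    (A1 A2 A3 B1 B2 B3 : Matrix ι ι (ZMod 2)) (u w : ι → ZMod 2)
    (h : u ᵥ* (B1 + B2 + B3) + w ᵥ* (A1 + A2 + A3) = 0) :
    roundsVec A1 A2 A3 B1 B2 B3 (0, u, w, 0) = (0, u, w, 0) := by
  simp only [roundsVec, Matrix.zero_vecMul, add_zero, zero_add, Matrix.vecMul_add] at *
  refine Prod.ext rfl (Prod.ext rfl (Prod.ext rfl ?_))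
  rw [← h]; abel
end

section
/- Let A and B be ℓm×ℓm matrices over F2, each an F2-linear combination of monomials x^a y^b, and let C = C_ℓ ⊗ C_m where C_ℓ is the ℓ×ℓ permutation matrix sending index i to −i mod ℓ. Then the ZX-duality holds at the level of check row spaces: rowspace([Bᵀ | Aᵀ]) = { (w·C, u·C) : (u, w) ∈ rowspace([A | B]) }, where a row vector of length 2ℓm is written as the pair (u, w) of its two length-ℓm halves. -/
open Matrix Kronecker

/-- The `n × n` permutation matrix over `F₂` sending index `i` to `-i (mod n)`. -/
def negPerm (n : ℕ) [NeZero n] : Matrix (Fin n) (Fin n) (ZMod 2) :=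
  Matrix.of fun i j => if i = -j then 1 else 0


lemma negPerm_mul_negPerm (n : ℕ) [NeZero n] : negPerm n * negPerm n = 1 := by
  ext i j
  simp only [mul_apply, negPerm, of_apply, mul_ite, mul_one, mul_zero,
    Finset.sum_ite_eq', Finset.mem_univ, if_true, one_apply, neg_neg]

lemma negPerm_cyc (n : ℕ) [NeZero n] : negPerm n * cyc n * negPerm n = (cyc n)ᵀ := by
  ext i j
  simp only [mul_apply, negPerm, cyc, of_apply, transpose_apply, ite_mul, one_mul, zero_mul,
    mul_ite, mul_one, mul_zero, Finset.sum_ite_eq', Finset.mem_univ, if_true]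
  rw [Finset.sum_eq_single (-j - 1)]
  · have h1 : (-j : Fin n) = (-j - 1) + 1 := (sub_add_cancel _ _).symm
    have h2 : -(-j - 1 : Fin n) = j + 1 := by rw [neg_sub, sub_neg_eq_add, add_comm]
    rw [if_pos h1, h2]
  · intro b _ hb
    rw [if_neg]
    exact fun h => hb (eq_sub_of_add_eq h.symm)
  · simp

lemma conjPow {n : Type*} [Fintype n] [DecidableEq n]
    {C M : Matrix n n (ZMod 2)} (hC : C * C = 1) (a : ℕ) :
    C * M ^ a * C = (C * M * C) ^ a := by
  induction a with
  | zero => simp [hC]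
  | succ k ih =>
    rw [pow_succ, pow_succ, ← ih]
    have : (C * M ^ k * C) * (C * M * C) = C * M ^ k * (C * C) * M * C := by
      noncomm_ring
    rw [this, hC, mul_one, ← mul_assoc]

lemma C_mul_C (ℓ m : ℕ) [NeZero ℓ] [NeZero m] :
    (negPerm ℓ ⊗ₖ negPerm m) * (negPerm ℓ ⊗ₖ negPerm m) = 1 := by
  rw [← Matrix.mul_kronecker_mul, negPerm_mul_negPerm, negPerm_mul_negPerm,
    Matrix.one_kronecker_one]

lemma conj_x (ℓ m : ℕ) [NeZero ℓ] [NeZero m] :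
    (negPerm ℓ ⊗ₖ negPerm m) * (cyc ℓ ⊗ₖ (1 : Matrix (Fin m) (Fin m) (ZMod 2)))
    * (negPerm ℓ ⊗ₖ negPerm m) = (cyc ℓ ⊗ₖ (1 : Matrix (Fin m) (Fin m) (ZMod 2)))ᵀ := by
  rw [← Matrix.mul_kronecker_mul, ← Matrix.mul_kronecker_mul, negPerm_cyc,
    Matrix.mul_one, negPerm_mul_negPerm]
  ext ⟨i1,i2⟩ ⟨j1,j2⟩
  simp [Matrix.kroneckerMap_apply, Matrix.one_apply, eq_comm]

lemma conj_y (ℓ m : ℕ) [NeZero ℓ] [NeZero m] :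
    (negPerm ℓ ⊗ₖ negPerm m) * ((1 : Matrix (Fin ℓ) (Fin ℓ) (ZMod 2)) ⊗ₖ cyc m)
    * (negPerm ℓ ⊗ₖ negPerm m) = ((1 : Matrix (Fin ℓ) (Fin ℓ) (ZMod 2)) ⊗ₖ cyc m)ᵀ := by
  rw [← Matrix.mul_kronecker_mul, ← Matrix.mul_kronecker_mul, negPerm_cyc,
    Matrix.mul_one, negPerm_mul_negPerm]
  ext ⟨i1,i2⟩ ⟨j1,j2⟩
  simp [Matrix.kroneckerMap_apply, Matrix.one_apply, eq_comm]

lemma mem_span_rows {n p : Type*} [Fintype n] [Fintype p]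
    (M : Matrix n p (ZMod 2)) (v : p → ZMod 2) :
    v ∈ Submodule.span (ZMod 2) (Set.range fun i => M i) ↔ ∃ u, u ᵥ* M = v := by
  have hvm : ∀ u : n → ZMod 2, u ᵥ* M = ∑ i, u i • M i := by
    intro u
    ext j
    simp [vecMul, dotProduct, Finset.sum_apply]
  rw [← Fintype.range_linearCombination (ZMod 2) (fun i => M i)]
  constructor
  · rintro ⟨u, rfl⟩
    exact ⟨u, by rw [hvm]; rfl⟩
  · rintro ⟨u, rfl⟩
    exact ⟨u, by rw [Fintype.linearCombination_apply, hvm]⟩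

lemma conj_of_mem (ℓ m : ℕ) [NeZero ℓ] [NeZero m]
    (x y M : Matrix (Fin ℓ × Fin m) (Fin ℓ × Fin m) (ZMod 2))
    (hx : x = cyc ℓ ⊗ₖ (1 : Matrix (Fin m) (Fin m) (ZMod 2)))
    (hy : y = (1 : Matrix (Fin ℓ) (Fin ℓ) (ZMod 2)) ⊗ₖ cyc m)
    (hM : M ∈ Submodule.span (ZMod 2)
      {M : Matrix (Fin ℓ × Fin m) (Fin ℓ × Fin m) (ZMod 2) | ∃ a b : ℕ, M = x ^ a * y ^ b}) :
    (negPerm ℓ ⊗ₖ negPerm m) * M * (negPerm ℓ ⊗ₖ negPerm m) = Mᵀ := by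
  set C := negPerm ℓ ⊗ₖ negPerm m with hCdef
  have hCC : C * C = 1 := C_mul_C ℓ m
  have hcx : C * x * C = xᵀ := by rw [hx]; exact conj_x ℓ m
  have hcy : C * y * C = yᵀ := by rw [hy]; exact conj_y ℓ m
  have hcomm : Commute xᵀ yᵀ := by
    have hxy : x * y = y * x := by
      rw [hx, hy, ← Matrix.mul_kronecker_mul, ← Matrix.mul_kronecker_mul]
      simp
    unfold Commute SemiconjBy
    rw [← transpose_mul, ← transpose_mul, hxy]
  induction hM using Submodule.span_induction with
  | mem M h =>
    obtain ⟨a, b, rfl⟩ := h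
    have e1 : C * (x ^ a * y ^ b) * C = (C * x ^ a * C) * (C * y ^ b * C) := by
      have : (C * x ^ a * C) * (C * y ^ b * C) = C * x ^ a * (C * C) * y ^ b * C := by
        noncomm_ring
      rw [this, hCC, mul_one]
      noncomm_ring
    rw [e1, conjPow hCC, conjPow hCC, hcx, hcy, transpose_mul, transpose_pow, transpose_pow]
    exact (hcomm.pow_pow a b)
  | zero => simp
  | add M N _ _ ihM ihN =>
    rw [mul_add, add_mul, ihM, ihN, transpose_add]
  | smul c M _ ih =>
    rw [Matrix.mul_smul, Matrix.smul_mul, ih, transpose_smul]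

theorem stmt13 (ℓ m : ℕ) [NeZero ℓ] [NeZero m]
    (x y A B : Matrix (Fin ℓ × Fin m) (Fin ℓ × Fin m) (ZMod 2))
    (hx : x = cyc ℓ ⊗ₖ (1 : Matrix (Fin m) (Fin m) (ZMod 2)))
    (hy : y = (1 : Matrix (Fin ℓ) (Fin ℓ) (ZMod 2)) ⊗ₖ cyc m)
    (hA : A ∈ Submodule.span (ZMod 2)
      {M : Matrix (Fin ℓ × Fin m) (Fin ℓ × Fin m) (ZMod 2) | ∃ a b : ℕ, M = x ^ a * y ^ b})
    (hB : B ∈ Submodule.span (ZMod 2)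
      {M : Matrix (Fin ℓ × Fin m) (Fin ℓ × Fin m) (ZMod 2) | ∃ a b : ℕ, M = x ^ a * y ^ b}) :
    (Submodule.span (ZMod 2)
        (Set.range fun i => Matrix.fromCols Bᵀ Aᵀ i) :
      Set ((Fin ℓ × Fin m) ⊕ (Fin ℓ × Fin m) → ZMod 2))
      = (fun v : (Fin ℓ × Fin m) ⊕ (Fin ℓ × Fin m) → ZMod 2 =>
          Sum.elim ((v ∘ Sum.inr) ᵥ* (negPerm ℓ ⊗ₖ negPerm m))
                   ((v ∘ Sum.inl) ᵥ* (negPerm ℓ ⊗ₖ negPerm m))) ''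
        (Submodule.span (ZMod 2) (Set.range fun i => Matrix.fromCols A B i)) := by
  set C := negPerm ℓ ⊗ₖ negPerm m with hCdef
  have hCC : C * C = 1 := C_mul_C ℓ m
  have hAT : C * A * C = Aᵀ := conj_of_mem ℓ m x y A hx hy hA
  have hBT : C * B * C = Bᵀ := conj_of_mem ℓ m x y B hx hy hB
  ext v
  simp only [SetLike.mem_coe, mem_span_rows, Set.mem_image]
  constructor
  · rintro ⟨u, rfl⟩
    refine ⟨(u ᵥ* C) ᵥ* Matrix.fromCols A B, ⟨u ᵥ* C, rfl⟩, ?_⟩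
    rw [Matrix.vecMul_fromCols, Matrix.vecMul_fromCols]
    simp only [Sum.elim_comp_inl, Sum.elim_comp_inr]
    rw [Matrix.vecMul_vecMul, Matrix.vecMul_vecMul, Matrix.vecMul_vecMul, Matrix.vecMul_vecMul,
      ← mul_assoc C B C, hBT, ← mul_assoc C A C, hAT]
  · rintro ⟨w, ⟨u, rfl⟩, rfl⟩
    refine ⟨u ᵥ* C, ?_⟩
    rw [Matrix.vecMul_fromCols, Matrix.vecMul_fromCols]
    simp only [Sum.elim_comp_inl, Sum.elim_comp_inr]
    rw [Matrix.vecMul_vecMul, Matrix.vecMul_vecMul, Matrix.vecMul_vecMul, Matrix.vecMul_vecMul,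
      ← hAT, ← hBT,
      show C*(C*B*C) = (C*C)*(B*C) from by noncomm_ring,
      show C*(C*A*C) = (C*C)*(A*C) from by noncomm_ring,
      hCC, one_mul, one_mul]
end
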